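/- Let P, Q ∈ M_n(𝔽₂) satisfy P² = P, Q³ = 0, and (P+Q)⁴ + (P+Q)³ = 1 (where 1 is the identity matrix). Then trace(P + Q) = 0. -/

import Mathlib

/-!
Write `A = P + Q`, so that `Q = A - P`. Over `𝔽₂` the Frobenius gives `tr (X ^ 2) = tr X`, and
reducing `A ^ 8` modulo `A ^ 4 + A ^ 3 + 1` gives `A ^ 8 = A ^ 3 + A ^ 2 + A`; hence
`tr A = tr (A ^ 3)`. Expanding `tr (Q ^ 3) = 0` and `tr (Q ^ 3 * A * P) = 0` with `P ^ 2 = P` and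
the cyclicity of the trace gives `tr (A ^ 3) = tr (A ^ 2 * P) + tr (A * P) + tr P` and
`tr (A ^ 4 * P) + tr (A ^ 3 * P) = tr (A ^ 2 * P) + tr (A * P)`, while `(A ^ 4 + A ^ 3) * P = P`
makes the left side of the latter `tr P`. Together, `tr (A ^ 3) = 0`.
-/

theorem IsIdempotentElem.sub_pow_three {R : Type*} [Ring R] {a p : R} (hp : IsIdempotentElem p) :
    (a - p) ^ 3 = a ^ 3 - a ^ 2 * p - a * p * a - p * a ^ 2 + a * p + p * a * p + p * a - p := by
  have expand : (a - p) ^ 3 = a ^ 3 - a ^ 2 * p - a * p * a - p * a ^ 2 + a * (p * p)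
      + p * a * p + p * p * a - p * p * p := by
    noncomm_ring
  rw [expand, hp.eq, hp.eq]

namespace Matrix

variable {ι : Type*} [Fintype ι] [DecidableEq ι]

section CharTwo

variable {R : Type*} [CommRing R] [CharP R 2] {A P : Matrix ι ι R}

theorem trace_sub_idempotent_pow_three (hP : IsIdempotentElem P) :
    trace ((A - P) ^ 3) = trace (A ^ 3) + trace (A ^ 2 * P) + trace (A * P) + trace P := by
  have hAPA : trace (A * P * A) = trace (A ^ 2 * P) := by
    rw [trace_mul_comm, ← mul_assoc, ← sq]
  have hPA2 : trace (P * A ^ 2) = trace (A ^ 2 * P) := trace_mul_comm _ _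
  have hPAP : trace (P * A * P) = trace (A * P) := by
    rw [trace_mul_comm, ← mul_assoc, hP.eq, trace_mul_comm]
  have hPA : trace (P * A) = trace (A * P) := trace_mul_comm _ _
  rw [hP.sub_pow_three]
  simp only [trace_add, trace_sub, hAPA, hPA2, hPAP, hPA, CharTwo.sub_eq_add]
  linear_combination (trace (A ^ 2 * P) + trace (A * P)) * CharTwo.two_eq_zero (R := R)

theorem trace_sub_idempotent_pow_three_mul (hP : IsIdempotentElem P) :
    trace ((A - P) ^ 3 * (A * P)) =
      trace (A ^ 4 * P) + trace (A ^ 3 * P) + trace (A ^ 2 * P) + trace (A * P) := by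
  have hA4P : A ^ 3 * (A * P) = A ^ 4 * P := by noncomm_ring
  have hAPA2P : trace (A * P * A * (A * P)) = trace (A ^ 2 * P * (A * P)) := by
    rw [show A * P * A * (A * P) = A * P * (A ^ 2 * P) by noncomm_ring, trace_mul_comm,
      ← mul_assoc]
  have hPA3P : trace (P * A ^ 2 * (A * P)) = trace (A ^ 3 * P) := by
    rw [trace_mul_comm, show A * P * (P * A ^ 2) = A * (P * P) * A ^ 2 by noncomm_ring, hP.eq,
      trace_mul_comm, ← mul_assoc, ← pow_succ]
  have hPAPAP : trace (P * A * P * (A * P)) = trace (A * P * (A * P)) := by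
    rw [trace_mul_comm, show A * P * (P * A * P) = A * (P * P) * A * P by noncomm_ring, hP.eq,
      mul_assoc]
  have hPA2P : trace (P * A * (A * P)) = trace (A ^ 2 * P) := by
    rw [trace_mul_comm, show A * P * (P * A) = A * (P * P) * A by noncomm_ring, hP.eq]
    rw [trace_mul_comm, ← mul_assoc, ← sq]
  have hPAP : trace (P * (A * P)) = trace (A * P) := by
    rw [trace_mul_comm, mul_assoc, hP.eq]
  rw [hP.sub_pow_three]
  simp only [sub_mul, add_mul, trace_add, trace_sub, hA4P, hAPA2P, hPA3P, hPAPAP, hPA2P, hPAP,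
    CharTwo.sub_eq_add]
  -- the cyclic words `A ^ 2 * P * A * P` and `(A * P) ^ 2` each occur twice
  linear_combination
    (trace (A ^ 2 * P * (A * P)) + trace (A * P * (A * P))) * CharTwo.two_eq_zero (R := R)

theorem trace_pow_three_eq_zero (hP : IsIdempotentElem P) (hAP : (A - P) ^ 3 = 0)
    (hA : A ^ 4 + A ^ 3 = 1) : trace (A ^ 3) = 0 := by
  have cube := trace_sub_idempotent_pow_three (A := A) hP
  have cube_mul := trace_sub_idempotent_pow_three_mul (A := A) hP
  have relation : trace (A ^ 4 * P) + trace (A ^ 3 * P) = trace P := by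
    rw [← trace_add, ← add_mul, hA, one_mul]
  rw [hAP, trace_zero] at cube
  rw [hAP, zero_mul, trace_zero] at cube_mul
  linear_combination relation + cube_mul - cube

end CharTwo

theorem trace_sq_zmod_two (X : Matrix ι ι (ZMod 2)) : trace (X ^ 2) = trace X := by
  rw [ZMod.trace_pow_card, ZMod.pow_card]

theorem trace_pow_three_eq_trace_of_pow_four_add_pow_three_eq_one {A : Matrix ι ι (ZMod 2)}
    (hA : A ^ 4 + A ^ 3 = 1) : trace (A ^ 3) = trace A := by
  have octic : A ^ 8 = A ^ 3 + A ^ 2 + A - 2 • (A ^ 7 + A ^ 6 + A ^ 5) := by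
    have factor : A ^ 8 - (A ^ 3 + A ^ 2 + A - 2 • (A ^ 7 + A ^ 6 + A ^ 5)) =
        (A ^ 4 + A ^ 3 - 1) * (A ^ 4 + A ^ 3 + A ^ 2 + A) := by
      noncomm_ring
    rwa [hA, sub_self, zero_mul, sub_eq_zero] at factor
  have frobenius : trace (A ^ 8) = trace A := by
    rw [show 8 = 2 * 2 * 2 by rfl, pow_mul, pow_mul, trace_sq_zmod_two, trace_sq_zmod_two,
      trace_sq_zmod_two]
  have traced := congrArg trace octic
  rw [frobenius, trace_sub, trace_smul, CharTwo.two_nsmul, sub_zero, trace_add, trace_add,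
    trace_sq_zmod_two, add_assoc, CharTwo.add_self_eq_zero, add_zero] at traced
  exact traced.symm

end Matrix

theorem stmt_5 (n : ℕ) (P Q : Matrix (Fin n) (Fin n) (ZMod 2))
    (hP : P ^ 2 = P) (hQ : Q ^ 3 = 0)
    (hPQ : (P + Q) ^ 4 + (P + Q) ^ 3 = 1) :
    (P + Q).trace = 0 := by
  have hP' : IsIdempotentElem P := (sq P).symm.trans hP
  have hQ' : (P + Q - P) ^ 3 = 0 := by rwa [add_sub_cancel_left]
  rw [← Matrix.trace_pow_three_eq_trace_of_pow_four_add_pow_three_eq_one hPQ]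
  exact Matrix.trace_pow_three_eq_zero hP' hQ' hPQ
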